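/- Let f = f₀ + g be semiquasihomogeneous of type (d; w₁,...,wₙ) (deg g > d, f₀ quasihomogeneous of degree d) and let u be a unit in ℂ{x} (or a formal power series with u(0) ≠ 0). Writing u(0) = νᵈ for some ν ∈ ℂ* and letting ψ be the automorphism ψ(xᵢ) = ν^{wᵢ}xᵢ, the power series (u·f) ∘ ψ⁻¹ has the form f₀ + g' with deg g' > d. In particular u·f is right equivalent to a semiquasihomogeneous power series with the same principal part f₀. -/

import Mathlib

/-!
The substitution `xᵢ ↦ ν^{-wᵢ} xᵢ` is the ring endomorphism `ψ = rescale (ν⁻¹ ^ w ·)` of the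
power series ring; on coefficients it multiplies `xᵅ` by `ν^{-deg α}`. It scales the
quasihomogeneous `f₀` by `ν^{-d}`, never lowers weighted orders and fixes constant terms, so
`ψ u = νᵈ + h` with `h` of positive weighted order (all weights are positive). Hence
`ψ (u * (f₀ + g)) = f₀ + (h * ψ f₀ + ψ u * ψ g)`, and both summands have weighted order `> d`.
-/

open MvPowerSeries

/-- Weighted order of a multivariate power series (⊤ for the zero series). -/
noncomputable def wOrd {n : ℕ} (w : Fin n → ℕ) (g : MvPowerSeries (Fin n) ℂ) : ℕ∞ :=
  sInf {m : ℕ∞ | ∃ α : Fin n →₀ ℕ, MvPowerSeries.coeff α g ≠ 0 ∧ m = (∑ i, w i * α i : ℕ)}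

theorem Finsupp.weight_eq_sum_mul {σ : Type*} [Fintype σ] (w : σ → ℕ) (α : σ →₀ ℕ) :
    Finsupp.weight w α = ∑ i, w i * α i := by
  simp only [Finsupp.weight_eq_sum, smul_eq_mul, mul_comm]

theorem wOrd_eq_weightedOrder {n : ℕ} (w : Fin n → ℕ) (g : MvPowerSeries (Fin n) ℂ) :
    wOrd w g = g.weightedOrder w := by
  simp only [wOrd, ← Finsupp.weight_eq_sum_mul]
  refine le_antisymm ?_ (le_sInf ?_)
  · by_cases hg : g = 0
    · simp [hg]
    obtain ⟨α, hα, hαg⟩ := exists_coeff_ne_zero_and_weightedOrder w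
      ((ne_zero_iff_weightedOrder_finite w).mp hg)
    exact sInf_le ⟨α, hα, hαg.symm⟩
  · rintro m ⟨α, hα, rfl⟩
    exact weightedOrder_le w hα

namespace MvPowerSeries

variable {σ R : Type*}

section CommSemiring

variable [CommSemiring R] (w : σ → ℕ)

theorem coeff_rescale_pow_weight (c : R) (f : MvPowerSeries σ R) (α : σ →₀ ℕ) :
    coeff α (rescale (fun i ↦ c ^ w i) f) = c ^ Finsupp.weight w α * coeff α f := by
  rw [coeff_rescale, Finsupp.weight_apply, Finsupp.sum, ← Finset.prod_pow_eq_pow_sum,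
    Finsupp.prod]
  simp only [← pow_mul, smul_eq_mul, mul_comm]

theorem le_weightedOrder_rescale (a : σ → R) (f : MvPowerSeries σ R) :
    f.weightedOrder w ≤ (rescale a f).weightedOrder w :=
  le_weightedOrder w fun α hα ↦ by
    rw [coeff_rescale, coeff_eq_zero_of_lt_weightedOrder w hα, mul_zero]

theorem constantCoeff_rescale (a : σ → R) (f : MvPowerSeries σ R) :
    constantCoeff (rescale a f) = constantCoeff f := by
  rw [← coeff_zero_eq_constantCoeff_apply, ← coeff_zero_eq_constantCoeff_apply, coeff_rescale,
    Finsupp.prod_zero_index, one_mul]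

variable {w}

theorem IsWeightedHomogeneous.rescale_pow_weight {f : MvPowerSeries σ R} {p : ℕ}
    (hf : f.IsWeightedHomogeneous w p) (c : R) :
    rescale (fun i ↦ c ^ w i) f = C (c ^ p) * f := by
  ext α
  rw [coeff_rescale_pow_weight, coeff_C_mul]
  by_cases hα : coeff α f = 0
  · rw [hα, mul_zero, mul_zero]
  · rw [hf hα]

theorem IsWeightedHomogeneous.le_weightedOrder {f : MvPowerSeries σ R} {p : ℕ}
    (hf : f.IsWeightedHomogeneous w p) : (p : ℕ∞) ≤ f.weightedOrder w :=
  nat_le_weightedOrder w fun _ hα ↦ hf.coeff_eq_zero hα.ne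

end CommSemiring

theorem one_le_weightedOrder_sub_C_constantCoeff [Ring R] {w : σ → ℕ} (hw : ∀ i, w i ≠ 0)
    (f : MvPowerSeries σ R) : 1 ≤ (f - C (constantCoeff f)).weightedOrder w := by
  have : Finsupp.NonTorsionWeight ℕ w := Finsupp.nonTorsionWeight_of ℕ w hw
  refine nat_le_weightedOrder w fun α hα ↦ ?_
  rw [Nat.lt_one_iff, Finsupp.weight_eq_zero_iff_eq_zero] at hα
  simp [hα]

end MvPowerSeries

/-- Let `f = f₀ + g` be semiquasihomogeneous of type `(d; w)` and `u` a unit with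
`u(0) = νᵈ`. Composing `u·f` with the inverse of the automorphism `ψ(xᵢ) = ν^{wᵢ}xᵢ`
(whose effect on the coefficient of `xᵅ` is multiplication by `ν^{-deg α}`) yields a
power series of the form `f₀ + g'` with `deg g' > d`; hence `u·f` is right equivalent to
a semiquasihomogeneous series with the same principal part `f₀`. -/
theorem unit_times_sqh_right_equivalent (n : ℕ) (w : Fin n → ℕ) (hw : ∀ i, 0 < w i)
    (d : ℕ) (f₀ g : MvPowerSeries (Fin n) ℂ)
    (hf₀ : ∀ α : Fin n →₀ ℕ, MvPowerSeries.coeff α f₀ ≠ 0 → ∑ i, w i * α i = d)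
    (hg : (d : ℕ∞) < wOrd w g)
    (u : MvPowerSeries (Fin n) ℂ) (ν : ℂˣ)
    (hu : MvPowerSeries.constantCoeff u = (ν : ℂ) ^ d) :
    ∃ g' : MvPowerSeries (Fin n) ℂ,
      ((fun α : Fin n →₀ ℕ =>
          ((ν⁻¹ : ℂˣ) : ℂ) ^ (∑ i, w i * α i) * MvPowerSeries.coeff α (u * (f₀ + g)))
        : MvPowerSeries (Fin n) ℂ) = f₀ + g' ∧
      (d : ℕ∞) < wOrd w g' := by
  have hf₀ : f₀.IsWeightedHomogeneous w d := fun hα ↦ by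
    rw [Finsupp.weight_eq_sum_mul]; exact hf₀ _ hα
  have hψ : ((fun α : Fin n →₀ ℕ =>
      ((ν⁻¹ : ℂˣ) : ℂ) ^ (∑ i, w i * α i) * MvPowerSeries.coeff α (u * (f₀ + g)))
        : MvPowerSeries (Fin n) ℂ) = rescale (fun i ↦ ((ν⁻¹ : ℂˣ) : ℂ) ^ w i) (u * (f₀ + g)) :=
    MvPowerSeries.ext fun α ↦ by
      rw [coeff_rescale_pow_weight, Finsupp.weight_eq_sum_mul]; rfl
  set ψ := rescale fun i ↦ ((ν⁻¹ : ℂˣ) : ℂ) ^ w i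
  have hψu : 1 ≤ (ψ u - C ((ν : ℂ) ^ d)).weightedOrder w := by
    simpa only [ψ, constantCoeff_rescale, hu] using
      one_le_weightedOrder_sub_C_constantCoeff (fun i ↦ (hw i).ne') (ψ u)
  have hψf₀ : C ((ν : ℂ) ^ d) * ψ f₀ = f₀ := by
    rw [hf₀.rescale_pow_weight, ← mul_assoc, ← map_mul, ← mul_pow, Units.mul_inv, one_pow,
      map_one, one_mul]
  refine ⟨(ψ u - C ((ν : ℂ) ^ d)) * ψ f₀ + ψ u * ψ g, ?_, ?_⟩
  · rw [hψ, map_mul, map_add]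
    linear_combination hψf₀
  rw [wOrd_eq_weightedOrder] at hg ⊢
  have h₁ : (d : ℕ∞) < ((ψ u - C ((ν : ℂ) ^ d)) * ψ f₀).weightedOrder w :=
    calc (d : ℕ∞) < 1 + d := by norm_cast; omega
      _ ≤ (ψ u - C ((ν : ℂ) ^ d)).weightedOrder w + (ψ f₀).weightedOrder w :=
        add_le_add hψu (hf₀.le_weightedOrder.trans (le_weightedOrder_rescale w _ f₀))
      _ ≤ _ := le_weightedOrder_mul w
  have h₂ : (d : ℕ∞) < (ψ u * ψ g).weightedOrder w := hg.trans_le <|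
    (le_weightedOrder_rescale w _ g).trans (le_add_self.trans (le_weightedOrder_mul w))
  exact (lt_min h₁ h₂).trans_le (min_weightedOrder_le_add w)
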